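/- Let w ∈ (0,1), α > 0, r₆(w) := −(2w+1)²(w−1)³, r₇(w) := 8w⁵−20w⁴+14w³−3w²+1, t₁(w) := −4w⁵+12w⁴−13w³+8w²−w, and β := r₁ + r₂α² + r₃α with r₁ = (2w+1)²(w+2)(w−1)², r₂ = 4w⁵−4w⁴+5w³+6w²−5w+2, r₃ = −8w⁵+6w³−2w²+4, and set C₁,₁ := −(r₆ + t₁α² + r₇α)/β. Then: (a) if w ∈ [0.162, 1), then C₁,₁ ≤ 0 for every α > 0; (b) if w ∈ (0, 0.161], then there exists α > 0 such that C₁,₁ > 0, so the sign condition for the fourth-order interface stencil fails for some positive a₁, a₂. -/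
import Mathlib

noncomputable def r1 (w : ℝ) : ℝ := (2*w+1)^2*(w+2)*(w-1)^2
noncomputable def r2 (w : ℝ) : ℝ := 4*w^5-4*w^4+5*w^3+6*w^2-5*w+2
noncomputable def r3 (w : ℝ) : ℝ := -8*w^5+6*w^3-2*w^2+4
noncomputable def r6 (w : ℝ) : ℝ := -(2*w+1)^2*(w-1)^3
noncomputable def r7 (w : ℝ) : ℝ := 8*w^5-20*w^4+14*w^3-3*w^2+1
noncomputable def t1 (w : ℝ) : ℝ := -4*w^5+12*w^4-13*w^3+8*w^2-w

noncomputable def beta (α w : ℝ) : ℝ := r1 w + r2 w * α^2 + r3 w * α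

noncomputable def C11 (α w : ℝ) : ℝ := -(r6 w + t1 w * α^2 + r7 w * α) / beta α w

lemma r1_pos {w : ℝ} (h0 : 0 < w) (h1 : w < 1) : 0 < r1 w := by
  unfold r1
  have hne : w - 1 ≠ 0 := by linarith
  have h2 : 0 < (w-1)^2 := by positivity
  have h3 : 0 < (2*w+1)^2 := by positivity
  have h4 : 0 < w + 2 := by linarith
  positivity

lemma r2_pos {w : ℝ} (h0 : 0 < w) (h1 : w < 1) : 0 < r2 w := by
  unfold r2; nlinarith [sq_nonneg w, sq_nonneg (w-1), sq_nonneg (w*(w-1)), pow_pos h0 3, pow_pos h0 5]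

lemma r3_nonneg {w : ℝ} (h0 : 0 < w) (h1 : w < 1) : 0 ≤ r3 w := by
  unfold r3
  have key : -8*w^5+6*w^3-2*w^2+4 = (1-w)*(8*w^4+8*w^3+2*w^2+4*w+4) := by ring
  rw [key]
  have : (0:ℝ) ≤ 1 - w := by linarith
  positivity

lemma beta_pos {w : ℝ} (h0 : 0 < w) (h1 : w < 1) {α : ℝ} (ha : 0 < α) : 0 < beta α w := by
  unfold beta
  have := r1_pos h0 h1
  have := r2_pos h0 h1
  have := r3_nonneg h0 h1
  have h2 : 0 < α^2 := by positivity
  nlinarith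

lemma r6_pos {w : ℝ} (h0 : 0 < w) (h1 : w < 1) : 0 < r6 w := by
  unfold r6
  have hne : w - 1 ≠ 0 := by linarith
  have h2 : 0 < (w-1)^2 := by positivity
  have h3 : (w-1)^3 < 0 := by
    have : (w-1)^3 = (w-1) * (w-1)^2 := by ring
    rw [this]; exact mul_neg_of_neg_of_pos (by linarith) h2
  have h4 : 0 < (2*w+1)^2 := by positivity
  nlinarith

lemma r7_pos {w : ℝ} (h0 : 0 < w) (h1 : w < 1) : 0 < r7 w := by
  unfold r7
  nlinarith [sq_nonneg (w*(w-1)), sq_nonneg (w^2*(w-1)), pow_pos h0 3, sq_nonneg (2*w-1), sq_nonneg w]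

lemma t1_nonneg {w : ℝ} (h0 : (0.162:ℝ) ≤ w) (h1 : w < 1) : 0 ≤ t1 w := by
  unfold t1
  nlinarith [mul_nonneg (sub_nonneg.2 h0) (sub_nonneg.2 h0), sq_nonneg (w - 0.162), sq_nonneg (w-1), mul_nonneg (mul_nonneg (sub_nonneg.2 h0) (sub_nonneg.2 h0)) (sub_nonneg.2 h0), mul_pos (by linarith : (0:ℝ) < 1 - w) (by linarith : (0:ℝ) < w)]

lemma t1_neg {w : ℝ} (h0 : 0 < w) (h1 : w ≤ 0.161) : t1 w < 0 := by
  unfold t1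
  nlinarith [mul_pos h0 h0, mul_nonneg (sub_nonneg.2 h1) h0.le, mul_nonneg (mul_nonneg (sub_nonneg.2 h1) h0.le) h0.le, sq_nonneg (w - 0.161), mul_nonneg (sq_nonneg (w-0.161)) h0.le]

theorem stmt5 (w : ℝ) (hw : w ∈ Set.Ioo (0 : ℝ) 1) :
    (w ∈ Set.Ico (0.162 : ℝ) 1 → ∀ α : ℝ, 0 < α → C11 α w ≤ 0) ∧
    (w ∈ Set.Ioc (0 : ℝ) 0.161 → ∃ α : ℝ, 0 < α ∧ 0 < C11 α w) := by
  obtain ⟨h0, h1⟩ := hw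
  constructor
  · rintro ⟨hl, hr⟩ α ha
    have hb := beta_pos h0 h1 ha
    have hN : 0 ≤ r6 w + t1 w * α^2 + r7 w * α := by
      have := r6_pos h0 h1
      have := r7_pos h0 h1
      have := t1_nonneg hl h1
      have : 0 ≤ t1 w * α^2 := by positivity
      nlinarith
    unfold C11
    apply div_nonpos_of_nonpos_of_nonneg <;> linarith
  · rintro ⟨_, hr⟩
    have ht := t1_neg h0 hr
    set A : ℝ := max 1 ((r7 w + r6 w) / (-t1 w) + 1) with hA
    have hA1 : (1:ℝ) ≤ A := le_max_left _ _
    have hApos : 0 < A := by linarith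
    refine ⟨A, hApos, ?_⟩
    have hb := beta_pos h0 h1 hApos
    have h6 := r6_pos h0 h1
    have hAgt : (r7 w + r6 w) / (-t1 w) < A := lt_of_lt_of_le (by linarith) (le_max_right _ _)
    have hnt : 0 < -t1 w := by linarith
    have h2 : r7 w + r6 w < A * (-t1 w) := by
      rw [div_lt_iff₀ hnt] at hAgt; linarith
    have hN : r6 w + t1 w * A^2 + r7 w * A < 0 := by
      have hA2 : A ≤ A^2 := by nlinarith
      have : t1 w * A^2 ≤ t1 w * A * A := by ring_nf; nlinarith
      nlinarith [mul_lt_mul_of_pos_right h2 hApos]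
    unfold C11
    apply div_pos (by linarith) hb
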